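/- Let A be a complex Banach algebra possessing a contractive approximate identity, and let H be a Hilbert A-module, with representation π_H : A → B(H), which is completely sub-tracing. Then the double commutant π_H(A)'' equals the closure of π_H(A) in the weak operator topology on B(H). -/

import Mathlib

noncomputable section

open Filter

open scoped ENNReal

/-- A contractive approximate identity for a (possibly non-unital) normed algebra `A`:
a net `(e i)`, indexed by a nontrivial filter, with `‖e i‖ ≤ 1` for all `i`, such that
`e i * a → a` and `a * e i → a` in norm for every `a ∈ A`. -/
def HasCAI (A : Type) [NonUnitalNormedRing A] : Prop :=
  ∃ (ι : Type) (l : Filter ι) (e : ι → A), l.NeBot ∧ (∀ i, ‖e i‖ ≤ 1) ∧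
    ∀ a : A, Tendsto (fun i => e i * a) l (nhds a) ∧ Tendsto (fun i => a * e i) l (nhds a)

variable (A : Type) [NonUnitalNormedRing A] [NormedSpace ℂ A] [IsScalarTower ℂ A A]
  [SMulCommClass ℂ A A]

/-- A Hilbert `A`-module structure on the Hilbert space `K`: a contractive algebra
homomorphism `π : A → B(K)` which is nondegenerate, i.e. the linear span of
`{π a x : a ∈ A, x ∈ K}` is dense in `K`. -/
def IsHilbertRep {K : Type} [NormedAddCommGroup K] [InnerProductSpace ℂ K] [CompleteSpace K]
    (π : A →ₙₐ[ℂ] (K →L[ℂ] K)) : Prop :=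
  (∀ a : A, ‖π a‖ ≤ ‖a‖) ∧
  Dense ((Submodule.span ℂ {x : K | ∃ (a : A) (y : K), π a y = x} : Submodule ℂ K) : Set K)

/-- A bounded `A`-module map between Hilbert `A`-modules. -/
def IsModuleMap {K L : Type} [NormedAddCommGroup K] [InnerProductSpace ℂ K]
    [NormedAddCommGroup L] [InnerProductSpace ℂ L]
    (πK : A →ₙₐ[ℂ] (K →L[ℂ] K)) (πL : A →ₙₐ[ℂ] (L →L[ℂ] L)) (T : K →L[ℂ] L) : Prop :=
  ∀ (a : A) (x : K), T (πK a x) = πL a (T x)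

/-- `H` is sub-tracing: for every closed `A`-invariant subspace `E` of `H` (a Hilbert
`A`-module under the restricted action), every Hilbert `A`-module `L`, and every nonzero
bounded `A`-module map `R : E → L`, there exists a bounded `A`-module map `V : H → E`
with `R ∘ V ≠ 0`. -/
def IsSubTracing {H : Type} [NormedAddCommGroup H] [InnerProductSpace ℂ H] [CompleteSpace H]
    (πH : A →ₙₐ[ℂ] (H →L[ℂ] H)) : Prop :=
  ∀ (E : Submodule ℂ H), IsClosed (E : Set H) →
    ∀ (hinv : ∀ (a : A), ∀ x ∈ E, πH a x ∈ E),
    ∀ (L : Type) [NormedAddCommGroup L] [InnerProductSpace ℂ L] [CompleteSpace L],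
    ∀ (πL : A →ₙₐ[ℂ] (L →L[ℂ] L)), IsHilbertRep A πL →
    ∀ R : ↥E →L[ℂ] L,
      (∀ (a : A) (x : ↥E), R ⟨πH a ↑x, hinv a ↑x x.2⟩ = πL a (R x)) → R ≠ 0 →
      ∃ V : H →L[ℂ] ↥E,
        (∀ (a : A) (x : H), (↑(V (πH a x)) : H) = πH a ↑(V x)) ∧ R.comp V ≠ 0

theorem diag_memℓp {H : Type} [NormedAddCommGroup H] [InnerProductSpace ℂ H] {ι : Type}
    (T : H →L[ℂ] H) (f : lp (fun _ : ι => H) 2) : Memℓp (fun i => T (f i)) 2 := by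
  apply memℓp_gen
  have hf : Summable fun i => ‖f i‖ ^ (2 : ℝ≥0∞).toReal :=
    (lp.memℓp f).summable (by norm_num)
  refine Summable.of_nonneg_of_le
    (fun i => Real.rpow_nonneg (norm_nonneg _) _) (fun i => ?_)
    (hf.mul_left (‖T‖ ^ (2 : ℝ≥0∞).toReal))
  calc ‖T (f i)‖ ^ (2 : ℝ≥0∞).toReal ≤ (‖T‖ * ‖f i‖) ^ (2 : ℝ≥0∞).toReal :=
        Real.rpow_le_rpow (norm_nonneg _) (T.le_opNorm _) (by norm_num)
    _ = _ := Real.mul_rpow (norm_nonneg _) (norm_nonneg _)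

/-- The diagonal amplification of an operator on `H` to the `ℓ²`-direct sum of `ι`
copies of `H`. -/
def lpDiag {H : Type} [NormedAddCommGroup H] [InnerProductSpace ℂ H] (ι : Type)
    (T : H →L[ℂ] H) : lp (fun _ : ι => H) 2 →L[ℂ] lp (fun _ : ι => H) 2 := by
  refine LinearMap.mkContinuous
    { toFun := fun f => ⟨fun i => T (f i), diag_memℓp T f⟩
      map_add' := ?_
      map_smul' := ?_ } ‖T‖ ?_
  · intro f g; ext i; simp; rfl
  · intro c f; ext i; simp
  · intro f
    apply lp.norm_le_of_tsum_le (by norm_num) (mul_nonneg (norm_nonneg T) (norm_nonneg f))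
    have hsum : Summable fun i => ‖T (f i)‖ ^ (2 : ℝ≥0∞).toReal :=
      (diag_memℓp T f).summable (by norm_num)
    have hf : Summable fun i => ‖f i‖ ^ (2 : ℝ≥0∞).toReal :=
      (lp.memℓp f).summable (by norm_num)
    have h1 : ∀ i, ‖T (f i)‖ ^ (2 : ℝ≥0∞).toReal ≤
        ‖T‖ ^ (2 : ℝ≥0∞).toReal * ‖f i‖ ^ (2 : ℝ≥0∞).toReal := fun i =>
      calc ‖T (f i)‖ ^ (2 : ℝ≥0∞).toReal ≤ (‖T‖ * ‖f i‖) ^ (2 : ℝ≥0∞).toReal :=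
            Real.rpow_le_rpow (norm_nonneg _) (T.le_opNorm _) (by norm_num)
        _ = _ := Real.mul_rpow (norm_nonneg _) (norm_nonneg _)
    calc (∑' i, ‖T (f i)‖ ^ (2 : ℝ≥0∞).toReal)
        ≤ ∑' i, ‖T‖ ^ (2 : ℝ≥0∞).toReal * ‖f i‖ ^ (2 : ℝ≥0∞).toReal :=
          Summable.tsum_le_tsum h1 hsum (hf.mul_left _)
      _ = ‖T‖ ^ (2 : ℝ≥0∞).toReal * ∑' i, ‖f i‖ ^ (2 : ℝ≥0∞).toReal := tsum_mul_left
      _ = ‖T‖ ^ (2 : ℝ≥0∞).toReal * ‖f‖ ^ (2 : ℝ≥0∞).toReal := by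
          rw [lp.norm_rpow_eq_tsum (by norm_num) f]
      _ = (‖T‖ * ‖f‖) ^ (2 : ℝ≥0∞).toReal :=
          (Real.mul_rpow (norm_nonneg _) (norm_nonneg _)).symm

/-- The multiple `H^(ι)` of a representation: the `ℓ²`-direct sum of `ι` copies of `H`,
with the coordinatewise action of `A`. -/
def multipleRep {H : Type} [NormedAddCommGroup H] [InnerProductSpace ℂ H]
    (πH : A →ₙₐ[ℂ] (H →L[ℂ] H)) (ι : Type) :
    A →ₙₐ[ℂ] (lp (fun _ : ι => H) 2 →L[ℂ] lp (fun _ : ι => H) 2) where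
  toFun a := lpDiag ι (πH a)
  map_add' a b := by ext f i; simp [lpDiag]; rfl
  map_smul' c a := by ext f i; simp [lpDiag]
  map_zero' := by ext f i; simp [lpDiag]
  map_mul' a b := by ext f i; simp [lpDiag, ContinuousLinearMap.mul_apply]

/-- The closure of a set of operators in the weak operator topology on `B(K)`. -/
def wotClosure {K : Type} [NormedAddCommGroup K] [InnerProductSpace ℂ K]
    (S : Set (K →L[ℂ] K)) : Set (K →L[ℂ] K) :=
  ContinuousLinearMapWOT.ofCLM ⁻¹' closure (ContinuousLinearMapWOT.ofCLM '' S)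

/-!
In a sub-tracing module every element `S` of the double commutant `π(A)''` leaves each closed
invariant subspace `E` invariant: `S` commutes with every module map, so it preserves the
closed span `D ⊆ E` of the ranges of module maps into `E`; and `D = E`, since otherwise
compressing the action to `E ⊖ D` gives a nonzero module map `E → E ⊖ D` that kills the range of
every module map into `E`. The c.a.i. makes this compression nondegenerate.

Given `T ∈ π(A)''` and vectors `x₁, …, xₙ`, put them as coordinates of one `ξ ∈ H^(ℕ)`.
The amplification `T^(ℕ)` lies in the double commutant of `π^(ℕ)(A)`, so it preserves the closed
cyclic subspace of `ξ`, which contains `ξ` by the c.a.i. Hence `T^(ℕ) ξ` is a limit of vectors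
`π^(ℕ)(a) ξ`, i.e. `π(a) xₖ → T xₖ` simultaneously for all `k`, and `T` is in the WOT-closure
of `π(A)`.
The converse inclusion holds because commutants are WOT-closed.
-/

open Filter Topology Set

section Multiple

variable {A : Type} [NonUnitalNormedRing A] [NormedSpace ℂ A]
  {H : Type} [NormedAddCommGroup H] [InnerProductSpace ℂ H] {κ : Type}

@[simp]
lemma lpDiag_apply (T : H →L[ℂ] H) (f : lp (fun _ : κ => H) 2) (i : κ) :
    lpDiag κ T f i = T (f i) := rfl

lemma lpDiag_single [DecidableEq κ] (T : H →L[ℂ] H) (i : κ) (x : H) :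
    lpDiag κ T (lp.single 2 i x) = lp.single 2 i (T x) := by
  ext j
  simp only [lpDiag_apply, lp.single_apply]
  exact Pi.apply_single (fun _ => T) (fun _ => map_zero T) i x j

lemma norm_lpDiag_le (T : H →L[ℂ] H) : ‖lpDiag κ T‖ ≤ ‖T‖ :=
  LinearMap.mkContinuous_norm_le _ (norm_nonneg T) _

@[simp]
lemma multipleRep_apply (π : A →ₙₐ[ℂ] (H →L[ℂ] H)) (a : A) :
    multipleRep A π κ a = lpDiag κ (π a) := rfl

lemma norm_multipleRep_le (π : A →ₙₐ[ℂ] (H →L[ℂ] H)) (a : A) :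
    ‖multipleRep A π κ a‖ ≤ ‖π a‖ :=
  norm_lpDiag_le (π a)

/-- The matrix entries `evalⱼ ∘ W ∘ singleᵢ` of an operator `W` commuting with `π^(κ)(A)`
commute with `π(A)`, hence with `T`. -/
theorem lpDiag_mem_centralizer_centralizer {π : A →ₙₐ[ℂ] (H →L[ℂ] H)} {T : H →L[ℂ] H}
    (hT : T ∈ centralizer (centralizer (range π))) :
    lpDiag κ T ∈ centralizer (centralizer (range (multipleRep A π κ))) := by
  classical
  rintro W hW
  have hentry : ∀ i j, lp.evalCLM ℂ (fun _ : κ => H) 2 j ∘L W ∘L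
      lp.singleContinuousLinearMap ℂ (fun _ : κ => H) 2 i ∈ centralizer (range π) := by
    rintro i j _ ⟨a, rfl⟩
    ext v
    have := congr($(hW _ ⟨a, rfl⟩) (lp.single 2 i v) j)
    simpa [lp.evalCLM, lpDiag_single] using this
  refine lp.ext_continuousLinearMap ENNReal.ofNat_ne_top fun i => ?_
  ext v j
  simpa [lp.evalCLM, lpDiag_single] using congr($(hT _ (hentry i j)) v)

end Multiple

section ApproximateIdentity

variable {A : Type} [NonUnitalNormedRing A] [NormedSpace ℂ A] {ι : Type} {l : Filter ι}

theorem tendsto_apply_of_mem_topologicalClosure_span {𝕜 E F : Type*} [NontriviallyNormedField 𝕜]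
    [NormedAddCommGroup E] [NormedSpace 𝕜 E] [NormedAddCommGroup F] [NormedSpace 𝕜 F]
    {T : ι → E →L[𝕜] F} {f : E →L[𝕜] F} {C : ℝ} (hT : ∀ i, ‖T i‖ ≤ C)
    {S : Set E} (hS : ∀ z ∈ S, Tendsto (fun i => T i z) l (𝓝 (f z)))
    {x : E} (hx : x ∈ (Submodule.span 𝕜 S).topologicalClosure) :
    Tendsto (fun i => T i x) l (𝓝 (f x)) := by
  let G : Submodule 𝕜 E :=
    { carrier := {x | Tendsto (fun i => T i x) l (𝓝 (f x))}
      add_mem' := fun hx hy => by simpa using hx.add hy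
      zero_mem' := by simpa using tendsto_const_nhds
      smul_mem' := fun c x hx => by simpa using hx.const_smul c }
  have hG : IsClosed (G : Set E) :=
    Equicontinuous.isClosed_setOfPred_tendsto
      (((NormedSpace.equicontinuous_TFAE T).out 5 1).mp (show ∃ C, ∀ i, ‖T i‖ ≤ C from ⟨C, hT⟩))
      f.continuous
  exact Submodule.topologicalClosure_minimal _
    (Submodule.span_le.2 fun z hz => show z ∈ G from hS z hz) hG hx

variable {K : Type} [NormedAddCommGroup K] [InnerProductSpace ℂ K]
  {π : A →ₙₐ[ℂ] (K →L[ℂ] K)} {e : ι → A}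

theorem IsHilbertRep.tendsto_apply [CompleteSpace K] (hπ : IsHilbertRep A π) (he1 : ∀ i, ‖e i‖ ≤ 1)
    (hca : ∀ a, Tendsto (fun i => e i * a) l (𝓝 a)) (x : K) :
    Tendsto (fun i => π (e i) x) l (𝓝 x) := by
  refine tendsto_apply_of_mem_topologicalClosure_span (f := .id ℂ K)
    (fun i => (hπ.1 _).trans (he1 i)) ?_ (hπ.2 x)
  rintro _ ⟨a, y, rfl⟩
  have hcont : Continuous fun b : A => π b y :=
    (continuous_eval_const y).comp
      (AddMonoidHomClass.continuous_of_bound π 1 (by simpa using hπ.1))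
  simpa [Function.comp_def, map_mul, mul_apply_eq_comp] using (hcont.tendsto a).comp (hca a)

theorem isHilbertRep_of_tendsto [CompleteSpace K] [l.NeBot] (hπ : ∀ a, ‖π a‖ ≤ ‖a‖)
    (htend : ∀ x, Tendsto (fun i => π (e i) x) l (𝓝 x)) : IsHilbertRep A π :=
  ⟨hπ, fun x => mem_closure_of_tendsto (htend x)
    (Eventually.of_forall fun i => Submodule.subset_span ⟨e i, x, rfl⟩)⟩

theorem tendsto_multipleRep_apply {κ : Type} {C : ℝ} (hC : ∀ i, ‖π (e i)‖ ≤ C)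
    (htend : ∀ x, Tendsto (fun i => π (e i) x) l (𝓝 x)) (f : lp (fun _ : κ => K) 2) :
    Tendsto (fun i => multipleRep A π κ (e i) f) l (𝓝 f) := by
  classical
  refine tendsto_apply_of_mem_topologicalClosure_span (f := .id ℂ _)
    (S := ⋃ j, range (lp.single 2 j)) (fun i => (norm_multipleRep_le π _).trans (hC i)) ?_ ?_
  · simp only [mem_iUnion, mem_range]
    rintro _ ⟨j, x, rfl⟩
    simpa [Function.comp_def, lpDiag_single] using
      ((lp.singleContinuousLinearMap ℂ (fun _ : κ => K) 2 j).continuous.tendsto x).comp (htend x)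
  · exact mem_closure_of_tendsto (lp.hasSum_single ENNReal.ofNat_ne_top f)
      (Eventually.of_forall fun s => Submodule.sum_mem _ fun j _ =>
        Submodule.subset_span (mem_iUnion.2 ⟨j, f j, rfl⟩))

end ApproximateIdentity

section WeakOperatorTopology

variable {K : Type} [NormedAddCommGroup K] [InnerProductSpace ℂ K]

theorem wotClosure_subset_centralizer {S X : Set (K →L[ℂ] K)} (h : S ⊆ centralizer X) :
    wotClosure S ⊆ centralizer X := by
  have hsub :
      ContinuousLinearMapWOT.ofCLM '' S ⊆ centralizer (ContinuousLinearMapWOT.ofCLM '' X) := by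
    rintro _ ⟨U, hU, rfl⟩ _ ⟨V, hV, rfl⟩
    exact congrArg ContinuousLinearMapWOT.ofCLM (h hU V hV)
  intro T hT V hV
  exact ContinuousLinearMapWOT.ofCLM_injective
    ((isClosed_centralizer _).closure_subset_iff.2 hsub hT _ ⟨V, hV, rfl⟩)

theorem mem_wotClosure_of_forall_finset {S : Set (K →L[ℂ] K)} {T : K →L[ℂ] K}
    (h : ∀ (s : Finset K) (ε : ℝ), 0 < ε → ∃ U ∈ S, ∀ x ∈ s, ‖T x - U x‖ < ε) :
    T ∈ wotClosure S := by
  classical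
  choose U hUS hU using fun p : Finset K × ℕ => h p.1 (1 / (p.2 + 1)) Nat.one_div_pos_of_nat
  refine mem_closure_of_tendsto (f := fun p => ContinuousLinearMapWOT.ofCLM (U p)) (b := atTop)
    ?_ (Eventually.of_forall fun p => ⟨U p, hUS p, rfl⟩)
  rw [ContinuousLinearMapWOT.tendsto_iff_forall_dual_apply_tendsto]
  intro x y
  refine (y.continuous.tendsto (T x)).comp ?_
  rw [Metric.tendsto_atTop]
  intro ε hε
  obtain ⟨N, hN⟩ := exists_nat_one_div_lt hε
  refine ⟨({x}, N), fun p hp => ?_⟩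
  rw [dist_comm, dist_eq_norm]
  calc ‖T x - U p x‖ < 1 / (p.2 + 1) := hU p x (hp.1 (Finset.mem_singleton_self x))
    _ ≤ 1 / (N + 1) := by gcongr; exact_mod_cast hp.2
    _ < ε := hN

end WeakOperatorTopology

section OrthogonalComplementInSubspace

variable {𝕜 V : Type*} [RCLike 𝕜] [NormedAddCommGroup V] [InnerProductSpace 𝕜 V]
  {D E : Submodule 𝕜 V} [(Dᗮ ⊓ E).HasOrthogonalProjection]

theorem Submodule.orthogonalProjectionOnto_orthogonal_inf_eq_zero {x : V} (hx : x ∈ D) :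
    (Dᗮ ⊓ E).orthogonalProjectionOnto x = 0 :=
  orthogonalProjectionOnto_apply_of_mem_orthogonal
    (orthogonal_le inf_le_left (D.le_orthogonal_orthogonal hx))

theorem Submodule.sub_starProjection_orthogonal_inf_mem [D.HasOrthogonalProjection] (hDE : D ≤ E)
    {x : V} (hx : x ∈ E) :
    x - (Dᗮ ⊓ E).starProjection x ∈ D := by
  have hP : (Dᗮ ⊓ E).starProjection x = x - D.starProjection x := by
    refine eq_starProjection_of_mem_orthogonal
      ⟨D.sub_starProjection_mem_orthogonal x, E.sub_mem hx (hDE (D.starProjection_apply_mem x))⟩ ?_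
    rw [sub_sub_cancel]
    exact orthogonal_le inf_le_left (D.le_orthogonal_orthogonal (D.starProjection_apply_mem x))
  rw [hP, sub_sub_cancel]
  exact D.starProjection_apply_mem x

theorem Submodule.mem_of_orthogonalProjectionOnto_orthogonal_inf_eq_zero
    [D.HasOrthogonalProjection] (hDE : D ≤ E) {x : V}
    (hx : x ∈ E) (h : (Dᗮ ⊓ E).orthogonalProjectionOnto x = 0) : x ∈ D := by
  simpa [starProjection_apply, h] using sub_starProjection_orthogonal_inf_mem hDE hx

end OrthogonalComplementInSubspace

theorem Submodule.apply_mem_topologicalClosure_span {R M : Type*} [Semiring R]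
    [TopologicalSpace M] [AddCommMonoid M] [Module R M] [ContinuousConstSMul R M] [ContinuousAdd M]
    {f : M →L[R] M} {U : Set M} (hf : ∀ x ∈ U, f x ∈ U) {x : M}
    (hx : x ∈ (span R U).topologicalClosure) : f x ∈ (span R U).topologicalClosure := by
  have hspan : span R U ≤ (span R U).topologicalClosure.comap (f : M →ₗ[R] M) :=
    span_le.2 fun y hy => le_topologicalClosure _ (subset_span (hf y hy))
  exact topologicalClosure_minimal _ hspan
    ((isClosed_topologicalClosure _).preimage f.continuous) hx

def IsInvariantSubspace {A : Type} [NonUnitalNormedRing A] [NormedSpace ℂ A]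
    {K : Type} [NormedAddCommGroup K] [InnerProductSpace ℂ K]
    (π : A →ₙₐ[ℂ] (K →L[ℂ] K)) (E : Submodule ℂ K) : Prop :=
  ∀ (a : A), ∀ x ∈ E, π a x ∈ E

section Compression

variable {A : Type} [NonUnitalNormedRing A] [NormedSpace ℂ A]
  {K : Type} [NormedAddCommGroup K] [InnerProductSpace ℂ K] {π : A →ₙₐ[ℂ] (K →L[ℂ] K)}
  {D E : Submodule ℂ K} [D.HasOrthogonalProjection] [CompleteSpace ↥(Dᗮ ⊓ E)]

/-- The compression of `π` to `E ⊖ D` is multiplicative because `D` is invariant. -/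
theorem orthogonalProjectionOnto_orthogonal_inf_map_eq (hDE : D ≤ E)
    (hD : IsInvariantSubspace π D) (a : A) {w : K} (hw : w ∈ E) :
    (Dᗮ ⊓ E).orthogonalProjectionOnto (π a w) =
      (Dᗮ ⊓ E).orthogonalProjectionOnto (π a ((Dᗮ ⊓ E).orthogonalProjectionOnto w)) := by
  rw [← sub_eq_zero, ← map_sub, ← map_sub]
  exact Submodule.orthogonalProjectionOnto_orthogonal_inf_eq_zero
    (hD a _ (Submodule.sub_starProjection_orthogonal_inf_mem hDE hw))

variable (hDE : D ≤ E) (hD : IsInvariantSubspace π D) (hE : IsInvariantSubspace π E)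

def compressRep : A →ₙₐ[ℂ] (↥(Dᗮ ⊓ E) →L[ℂ] ↥(Dᗮ ⊓ E)) where
  toFun a := (Dᗮ ⊓ E).orthogonalProjectionOnto ∘L π a ∘L (Dᗮ ⊓ E).subtypeL
  map_smul' c a := by simp
  map_zero' := by simp
  map_add' a b := by simp [ContinuousLinearMap.add_comp, ContinuousLinearMap.comp_add]
  map_mul' a b := ContinuousLinearMap.ext fun z => by
    simpa [map_mul, mul_apply_eq_comp] using
      orthogonalProjectionOnto_orthogonal_inf_map_eq hDE hD a (hE b _ z.2.2)

@[simp]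
lemma compressRep_apply (a : A) (z : ↥(Dᗮ ⊓ E)) :
    compressRep hDE hD hE a z = (Dᗮ ⊓ E).orthogonalProjectionOnto (π a z) := rfl

theorem norm_compressRep_le (hπ : ∀ a, ‖π a‖ ≤ ‖a‖) (a : A) :
    ‖compressRep hDE hD hE a‖ ≤ ‖a‖ :=
  calc ‖compressRep hDE hD hE a‖
      ≤ ‖(Dᗮ ⊓ E).orthogonalProjectionOnto‖ * (‖π a‖ * ‖(Dᗮ ⊓ E).subtypeL‖) :=
        (ContinuousLinearMap.opNorm_comp_le _ _).trans
          (mul_le_mul_of_nonneg_left (ContinuousLinearMap.opNorm_comp_le _ _) (norm_nonneg _))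
    _ ≤ 1 * (‖a‖ * 1) := by
        gcongr
        exacts [Submodule.orthogonalProjectionOnto_norm_le _, hπ a,
          Submodule.norm_subtypeL_le _]
    _ = ‖a‖ := by ring

theorem isHilbertRep_compressRep (hπ : ∀ a, ‖π a‖ ≤ ‖a‖) {ι : Type} {l : Filter ι} [l.NeBot]
    {e : ι → A} (htend : ∀ x, Tendsto (fun i => π (e i) x) l (𝓝 x)) :
    IsHilbertRep A (compressRep hDE hD hE) :=
  isHilbertRep_of_tendsto (norm_compressRep_le hDE hD hE hπ) fun z => by
    simpa [Function.comp_def] using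
      ((Dᗮ ⊓ E).orthogonalProjectionOnto.continuous.tendsto _).comp (htend z)

end Compression

section Trace

variable {A : Type} [NonUnitalNormedRing A] [NormedSpace ℂ A]
  {K : Type} [NormedAddCommGroup K] [InnerProductSpace ℂ K] {π : A →ₙₐ[ℂ] (K →L[ℂ] K)}

theorem IsModuleMap.mem_centralizer_range {V : K →L[ℂ] K} (hV : IsModuleMap A π π V) :
    V ∈ centralizer (range π) := by
  rintro _ ⟨a, rfl⟩
  ext x
  exact (hV a x).symm

def traceSubmodule (π : A →ₙₐ[ℂ] (K →L[ℂ] K)) (E : Submodule ℂ K) : Submodule ℂ K :=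
  (Submodule.span ℂ {x | ∃ V : K →L[ℂ] K, IsModuleMap A π π V ∧ (∀ ζ, V ζ ∈ E) ∧ x ∈ range V}
    ).topologicalClosure

variable {E : Submodule ℂ K}

theorem traceSubmodule_le (hEc : IsClosed (E : Set K)) : traceSubmodule π E ≤ E := by
  refine Submodule.topologicalClosure_minimal _ (Submodule.span_le.2 ?_) hEc
  rintro _ ⟨V, -, hVE, ζ, rfl⟩
  exact hVE ζ

theorem isInvariantSubspace_traceSubmodule : IsInvariantSubspace π (traceSubmodule π E) := by
  refine fun a x hx => Submodule.apply_mem_topologicalClosure_span (f := π a) ?_ hx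
  rintro _ ⟨V, hV, hVE, ζ, rfl⟩
  exact ⟨V, hV, hVE, π a ζ, hV a ζ⟩

theorem apply_mem_traceSubmodule {S : K →L[ℂ] K} (hS : S ∈ centralizer (centralizer (range π)))
    {x : K} (hx : x ∈ traceSubmodule π E) : S x ∈ traceSubmodule π E := by
  refine Submodule.apply_mem_topologicalClosure_span ?_ hx
  rintro _ ⟨V, hV, hVE, ζ, rfl⟩
  exact ⟨V, hV, hVE, S ζ, congr($(hS V hV.mem_centralizer_range) ζ)⟩

end Trace

section SubTracing

variable {A : Type} [NonUnitalNormedRing A] [NormedSpace ℂ A]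
  {K : Type} [NormedAddCommGroup K] [InnerProductSpace ℂ K] [CompleteSpace K]
  {π : A →ₙₐ[ℂ] (K →L[ℂ] K)} {ι : Type} {l : Filter ι} [l.NeBot] {e : ι → A}

theorem IsSubTracing.le_traceSubmodule (hsub : IsSubTracing A π) (hπ : ∀ a, ‖π a‖ ≤ ‖a‖)
    (htend : ∀ x, Tendsto (fun i => π (e i) x) l (𝓝 x)) {E : Submodule ℂ K}
    (hEc : IsClosed (E : Set K)) (hE : IsInvariantSubspace π E) : E ≤ traceSubmodule π E := by
  set D := traceSubmodule π E
  have hDE : D ≤ E := traceSubmodule_le hEc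
  have hD : IsInvariantSubspace π D := isInvariantSubspace_traceSubmodule
  have : CompleteSpace D := (Submodule.isClosed_topologicalClosure _).completeSpace_coe
  have : CompleteSpace ↥(Dᗮ ⊓ E) := (D.isClosed_orthogonal.inter hEc).completeSpace_coe
  set P := (Dᗮ ⊓ E).orthogonalProjectionOnto
  by_contra hED
  obtain ⟨x, hxE, hxD⟩ := SetLike.not_le_iff_exists.1 hED
  obtain ⟨V, hV, hRV⟩ := hsub E hEc hE _ (compressRep hDE hD hE)
    (isHilbertRep_compressRep hDE hD hE hπ htend) (P ∘L E.subtypeL)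
    (fun a y => orthogonalProjectionOnto_orthogonal_inf_map_eq hDE hD a y.2)
    (fun h => hxD (Submodule.mem_of_orthogonalProjectionOnto_orthogonal_inf_eq_zero hDE hxE
      congr($h ⟨x, hxE⟩)))
  refine hRV (ContinuousLinearMap.ext fun ζ =>
    Submodule.orthogonalProjectionOnto_orthogonal_inf_eq_zero ?_)
  exact Submodule.le_topologicalClosure _
    (Submodule.subset_span ⟨E.subtypeL ∘L V, hV, fun ζ => (V ζ).2, ζ, rfl⟩)

theorem IsSubTracing.apply_mem_of_mem_centralizer_centralizer (hsub : IsSubTracing A π)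
    (hπ : ∀ a, ‖π a‖ ≤ ‖a‖) (htend : ∀ x, Tendsto (fun i => π (e i) x) l (𝓝 x))
    {S : K →L[ℂ] K} (hS : S ∈ centralizer (centralizer (range π))) {E : Submodule ℂ K}
    (hEc : IsClosed (E : Set K)) (hE : IsInvariantSubspace π E) {x : K} (hx : x ∈ E) : S x ∈ E :=
  traceSubmodule_le hEc (apply_mem_traceSubmodule hS (hsub.le_traceSubmodule hπ htend hEc hE hx))

theorem IsSubTracing.apply_mem_closure_range (hsub : IsSubTracing A π)
    (hπ : ∀ a, ‖π a‖ ≤ ‖a‖) (htend : ∀ x, Tendsto (fun i => π (e i) x) l (𝓝 x))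
    {S : K →L[ℂ] K} (hS : S ∈ centralizer (centralizer (range π))) (ξ : K) :
    S ξ ∈ closure (range fun a => π a ξ) := by
  let φ : A →ₗ[ℂ] K := (ContinuousLinearMap.apply ℂ K ξ : (K →L[ℂ] K) →ₗ[ℂ] K) ∘ₗ
    (π : A →ₗ[ℂ] (K →L[ℂ] K))
  have hφ : ((Submodule.span ℂ (range φ)).topologicalClosure : Set K) =
      closure (range fun a => π a ξ) := by
    rw [Submodule.topologicalClosure_coe, ← LinearMap.coe_range, Submodule.span_eq]
    rfl
  rw [← hφ]
  refine hsub.apply_mem_of_mem_centralizer_centralizer hπ htend hS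
    (Submodule.isClosed_topologicalClosure _) ?_ ?_
  · refine fun a x hx => Submodule.apply_mem_topologicalClosure_span (f := π a) ?_ hx
    rintro _ ⟨b, rfl⟩
    exact ⟨a * b, by simp [φ, map_mul, mul_apply_eq_comp]⟩
  · exact mem_closure_of_tendsto (htend ξ) (Eventually.of_forall fun i =>
      Submodule.subset_span ⟨e i, rfl⟩)

end SubTracing

theorem exists_lp_forall_mem_exists_apply_eq {E : Type*} [NormedAddCommGroup E] (s : Finset E) :
    ∃ ξ : lp (fun _ : ℕ => E) 2, ∀ x ∈ s, ∃ i, ξ i = x := by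
  have hmem : Memℓp (fun i => s.toList.getD i 0) 2 :=
    (memℓp_zero ((finite_Iio s.toList.length).subset fun i hi =>
      lt_of_not_ge fun h => hi (List.getD_eq_default _ _ h))).of_exponent_ge (by norm_num)
  refine ⟨⟨_, hmem⟩, fun x hx => ?_⟩
  obtain ⟨i, hi, rfl⟩ := List.mem_iff_getElem.1 (Finset.mem_toList.2 hx)
  exact ⟨i, List.getD_eq_getElem _ _ hi⟩

theorem completely_subtracing_double_commutant (hA : HasCAI A)
    (H : Type) [NormedAddCommGroup H] [InnerProductSpace ℂ H] [CompleteSpace H]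
    (πH : A →ₙₐ[ℂ] (H →L[ℂ] H)) (hrep : IsHilbertRep A πH)
    (hsub : IsSubTracing A (multipleRep A πH ℕ)) :
    Set.centralizer (Set.centralizer (Set.range ⇑πH)) = wotClosure (Set.range ⇑πH) := by
  obtain ⟨ι, l, e, hl, he1, hcai⟩ := hA
  have htend := tendsto_multipleRep_apply (κ := ℕ) (fun i => (hrep.1 _).trans (he1 i))
    (hrep.tendsto_apply he1 fun a => (hcai a).1)
  refine subset_antisymm (fun T hT => mem_wotClosure_of_forall_finset fun s ε hε => ?_)
    (wotClosure_subset_centralizer subset_centralizer_centralizer)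
  obtain ⟨ξ, hξ⟩ := exists_lp_forall_mem_exists_apply_eq s
  have hTξ := hsub.apply_mem_closure_range (fun a => (norm_multipleRep_le πH a).trans (hrep.1 a))
    htend (lpDiag_mem_centralizer_centralizer hT) ξ
  obtain ⟨_, ⟨a, rfl⟩, ha⟩ := Metric.mem_closure_iff.1 hTξ ε hε
  refine ⟨πH a, mem_range_self a, fun x hx => ?_⟩
  obtain ⟨i, rfl⟩ := hξ x hx
  calc ‖T (ξ i) - πH a (ξ i)‖ = ‖(lpDiag ℕ T ξ - multipleRep A πH ℕ a ξ) i‖ := rfl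
    _ ≤ dist (lpDiag ℕ T ξ) (multipleRep A πH ℕ a ξ) :=
      (lp.norm_apply_le_norm two_ne_zero _ i).trans_eq (dist_eq_norm _ _).symm
    _ < ε := ha
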